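/- arXiv:2109.09306 — 7 statements merged into one kernel-verified Lean document; each statement's English description precedes it below -/
import Mathlib

section
/- Let k ≥ 6 and let L be the set of ((k−2)/(k−3))⁺-A-free words over the alphabet Fin k = {0, 1, …, k−1}. Define: L₁ = the set of all w ∈ L such that w has the prefix [0,1,…,k−3] and no factor of w of length k−1 has pairwise distinct letters; L₂ = the set of all w ∈ L such that w has the prefix [0,1,…,k−2] and no factor of w of length k has pairwise distinct letters; L₃ = the set of all w ∈ L having the prefix [0,1,…,k−1]. Then L is finite if and only if each of L₁, L₂, and L₃ is finite. -/
/-!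
With `β = (k-2)/(k-3)`, a `β⁺`-A-free word contains no square and no factor `a q a` with
`|q| ≤ k - 5`, since `a q a` is an Abelian `(|q|+2)/(|q|+1)`-power. So if it has no
`(k-2)`-permutation as a factor, every window of length `k - 2` begins and ends with the same
letter: the word has period `k - 3` and is shorter than a square of that period.
For `m = k-2, k-1, k`, a word without `(m+1)`-permutations splits just before the last letter of
its first `m`-permutation into a word without `m`-permutations and a word that, after renaming
letters, lies in `L₁`, `L₂` or `L₃`. As there are no `(k+1)`-permutations over `k` letters,
finiteness of `L₁`, `L₂`, `L₃` bounds the lengths of all words of `L`.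
-/

/-- `x` is a factor (contiguous subword) of `w`. -/
def IsFactor {A : Type*} (x w : List A) : Prop := ∃ p s, w = p ++ x ++ s

/-- `w` is a strong Abelian `β`-power: `w = u₁ ++ u₂ ++ ⋯ ++ u_k ++ u'` where
`k = ⌊β⌋`, `u₁ ≠ []`, all `uᵢ` are Abelian equivalent (permutations of each other),
`u'` is Abelian equivalent to the prefix of `u₁` of length `|u'| < |u₁|`,
and `|w| = β·|u₁|`. -/
def IsStrongAPower {A : Type*} (β : ℚ) (w : List A) : Prop :=
  ∃ (u₁ : List A) (us : List (List A)) (u' : List A),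
    u₁ ≠ [] ∧
    ((us.length : ℤ) + 1 = ⌊β⌋) ∧
    (∀ u ∈ us, u.Perm u₁) ∧
    u'.length < u₁.length ∧
    u'.Perm (u₁.take u'.length) ∧
    w = (u₁ :: us).flatten ++ u' ∧
    ((w.length : ℚ) = β * u₁.length)

/-- `w` is `β`-A-free: no factor of `w` is a strong Abelian `γ`-power for a rational `γ ≥ β`. -/
def AFree {A : Type*} (β : ℚ) (w : List A) : Prop :=
  ∀ x, IsFactor x w → ∀ γ : ℚ, β ≤ γ → ¬ IsStrongAPower γ x

/-- `w` is `β⁺`-A-free: no factor of `w` is a strong Abelian `γ`-power for a rational `γ > β`. -/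
def APlusFree {A : Type*} (β : ℚ) (w : List A) : Prop :=
  ∀ x, IsFactor x w → ∀ γ : ℚ, β < γ → ¬ IsStrongAPower γ x

open List

section Words

variable {A : Type*}

theorem isFactor_iff_isInfix {x w : List A} : IsFactor x w ↔ x <:+: w := by
  simp only [IsFactor, IsInfix, eq_comm]

theorem take_drop_isInfix (i m : ℕ) (w : List A) : (w.drop i).take m <:+: w :=
  (take_prefix m _).isInfix.trans (drop_suffix i w).isInfix

theorem IsFactor.exists_eq_take_drop {x w : List A} (h : IsFactor x w) :
    ∃ i, i + x.length ≤ w.length ∧ (w.drop i).take x.length = x := by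
  obtain ⟨p, s, rfl⟩ := h
  exact ⟨p.length, by simp, by simp⟩

theorem IsStrongAPower.map {B : Type*} (f : A → B) {γ : ℚ} {x : List A}
    (h : IsStrongAPower γ x) : IsStrongAPower γ (x.map f) := by
  obtain ⟨u₁, us, u', hu₁, hlen, hperm, hu'len, hu', hx, hγ⟩ := h
  refine ⟨u₁.map f, us.map (List.map f), u'.map f, by simpa using hu₁, by simpa using hlen,
    ?_, by simpa using hu'len, by simpa [map_take] using hu'.map f,
    by simp [hx, map_flatten], by simpa only [length_map] using hγ⟩
  simp only [mem_map, forall_exists_index, and_imp, forall_apply_eq_imp_iff₂]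
  exact fun u hu => (hperm u hu).map f

theorem isStrongAPower_two_append_self {u : List A} (hu : u ≠ []) :
    IsStrongAPower 2 (u ++ u) :=
  ⟨u, [u], [], hu, by norm_num, by simp, by simpa using length_pos_iff.2 hu, by simp,
    by simp, by simp; ring⟩

theorem isStrongAPower_cons_append_singleton (a : A) (q : List A) :
    IsStrongAPower (((q.length : ℚ) + 2) / ((q.length : ℚ) + 1)) (a :: (q ++ [a])) := by
  rcases eq_or_ne q [] with rfl | hq
  · simpa using isStrongAPower_two_append_self (u := [a]) (by simp)
  have hq' : (1 : ℚ) ≤ q.length := by exact_mod_cast length_pos_iff.2 hq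
  refine ⟨a :: q, [], [a], by simp, ?_, by simp, by simpa using length_pos_iff.2 hq, by simp,
    by simp, ?_⟩
  · rw [length_nil, Nat.cast_zero, zero_add, eq_comm, Int.floor_eq_iff,
      le_div_iff₀ (by linarith), div_lt_iff₀ (by linarith)]
    push_cast
    constructor <;> linarith
  · simp only [length_cons, length_append, length_nil]
    push_cast
    field_simp
    ring

theorem APlusFree.of_isInfix {β : ℚ} {v w : List A} (h : APlusFree β w) (hv : v <:+: w) :
    APlusFree β v := fun x hx γ hγ =>
  h x (isFactor_iff_isInfix.2 ((isFactor_iff_isInfix.1 hx).trans hv)) γ hγ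

theorem APlusFree.not_isInfix {β γ : ℚ} {x w : List A} (h : APlusFree β w) (hγ : β < γ)
    (hx : IsStrongAPower γ x) : ¬ x <:+: w :=
  fun hxw => h x (isFactor_iff_isInfix.2 hxw) γ hγ hx

theorem APlusFree.map_equiv {B : Type*} (σ : A ≃ B) {β : ℚ} {w : List A}
    (h : APlusFree β w) : APlusFree β (w.map σ) := by
  intro x hx γ hγ hpow
  have hx' : x.map σ.symm <:+: w := by
    simpa [map_map] using (isFactor_iff_isInfix.1 hx).map σ.symm
  exact h.not_isInfix hγ (hpow.map σ.symm) hx'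

def NoPermFactor (m : ℕ) (w : List A) : Prop :=
  ∀ x, IsFactor x w → x.length = m → ¬ x.Nodup

theorem NoPermFactor.of_isInfix {m : ℕ} {v w : List A} (h : NoPermFactor m w) (hv : v <:+: w) :
    NoPermFactor m v := fun x hx =>
  h x (isFactor_iff_isInfix.2 ((isFactor_iff_isInfix.1 hx).trans hv))

theorem NoPermFactor.map_equiv {B : Type*} (σ : A ≃ B) {m : ℕ} {w : List A}
    (h : NoPermFactor m w) : NoPermFactor m (w.map σ) := by
  intro x hx hlen hnd
  have hx' : x.map σ.symm <:+: w := by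
    simpa [map_map] using (isFactor_iff_isInfix.1 hx).map σ.symm
  exact h _ (isFactor_iff_isInfix.2 hx') (by simpa using hlen) (hnd.map σ.symm.injective)

theorem noPermFactor_of_card_lt [Fintype A] {m : ℕ} (hm : Fintype.card A < m) (w : List A) :
    NoPermFactor m w :=
  fun _ _ hlen hnd => by have := hnd.length_le_card; omega

theorem exists_cons_append_singleton_isInfix_of_not_nodup {l : List A} (h : ¬ l.Nodup) :
    ∃ (a : A) (q : List A), a :: (q ++ [a]) <:+: l := by
  induction l with
  | nil => simp at h
  | cons b t ih =>
    by_cases hb : b ∈ t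
    · obtain ⟨q, r, rfl⟩ := append_of_mem hb
      exact ⟨b, q, [], r, by simp⟩
    · obtain ⟨a, q, hq⟩ := ih fun hn => h (nodup_cons.2 ⟨hb, hn⟩)
      exact ⟨a, q, hq.trans (suffix_cons b t).isInfix⟩

theorem append_self_take_prefix_of_periodic {w : List A} {p : ℕ}
    (hper : ∀ i, i + p < w.length → w[i]? = w[i + p]?) (hlen : 2 * p ≤ w.length) :
    w.take p ++ w.take p <+: w := by
  have hshift : (w.drop p).take p = w.take p := by
    refine ext_getElem?' fun n hn => ?_
    simp only [getElem?_take, getElem?_drop]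
    split_ifs with hnp
    · rw [hper n (by omega), Nat.add_comm]
    · rfl
  have := take_prefix (p + p) w
  rwa [take_add, hshift] at this

end Words

section Step

variable {A : Type*} {β : ℚ}

theorem length_le_add_of_noPermFactor_succ {m C N : ℕ} (hm : 1 ≤ m)
    (hC : ∀ v : List A, APlusFree β v → NoPermFactor m v → v.length ≤ C)
    (hN : ∀ v : List A, APlusFree β v → (v.take m).Nodup → m ≤ v.length →
      NoPermFactor (m + 1) v → v.length ≤ N)
    {w : List A} (hw : APlusFree β w) (hwm : NoPermFactor (m + 1) w) : w.length ≤ C + N := by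
  classical
  by_cases hex : ∃ i, i + m ≤ w.length ∧ ((w.drop i).take m).Nodup
  · obtain ⟨him, hnd⟩ := Nat.find_spec hex
    set i := Nat.find hex
    have hsuffix : w.length - i ≤ N := by
      have hinf := drop_suffix i w
      simpa using hN _ (hw.of_isInfix hinf.isInfix) hnd (by simp; omega)
        (hwm.of_isInfix hinf.isInfix)
    have hprefix : i + m - 1 ≤ C := by
      have hinf := take_prefix (i + m - 1) w
      have hfree : NoPermFactor m (w.take (i + m - 1)) := by
        intro x hx hlen hxnd
        obtain ⟨j, hj, hjx⟩ := hx.exists_eq_take_drop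
        simp only [length_take, hlen] at hj hjx
        have hji : j < i := by omega
        refine Nat.find_min hex hji ⟨by omega, ?_⟩
        rw [drop_take, take_take, min_eq_left (by omega)] at hjx
        exact hjx ▸ hxnd
      have := hC _ (hw.of_isInfix hinf.isInfix) hfree
      rw [length_take] at this
      omega
    omega
  · push Not at hex
    refine (hC w hw fun x hx hlen hxnd => ?_).trans (Nat.le_add_right _ _)
    obtain ⟨j, hj, hjx⟩ := hx.exists_eq_take_drop
    rw [hlen] at hj hjx
    exact hex j hj (hjx ▸ hxnd)

end Step

theorem exists_perm_map_eq {A : Type*} {l₁ l₂ : List A} (h₁ : l₁.Nodup) (h₂ : l₂.Nodup)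
    (hlen : l₁.length = l₂.length) : ∃ σ : Equiv.Perm A, l₁.map σ = l₂ := by
  obtain ⟨σ, hσ⟩ := Equiv.Perm.exists_extending_pair l₁.get (l₂.get ∘ Fin.cast hlen)
    (nodup_iff_injective_get.1 h₁) ((nodup_iff_injective_get.1 h₂).comp (Fin.cast_injective _))
  exact ⟨σ, ext_get (by simp [hlen]) fun n _ _ => by simpa using hσ ⟨n, by omega⟩⟩

theorem finite_noPermFactor_succ {k m : ℕ} {β : ℚ} (hm : 1 ≤ m) (hmk : m ≤ k)
    (hC : {v : List (Fin k) | APlusFree β v ∧ NoPermFactor m v}.Finite)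
    (hN : {v : List (Fin k) | APlusFree β v ∧ (finRange k).take m <+: v ∧
      NoPermFactor (m + 1) v}.Finite) :
    {v : List (Fin k) | APlusFree β v ∧ NoPermFactor (m + 1) v}.Finite := by
  obtain ⟨C, hC⟩ := (hC.image length).bddAbove
  obtain ⟨N, hN⟩ := (hN.image length).bddAbove
  refine (finite_length_le _ (C + N)).subset fun w ⟨hw, hwm⟩ =>
    length_le_add_of_noPermFactor_succ hm (fun v hv hvm => hC ⟨v, ⟨hv, hvm⟩, rfl⟩) ?_ hw hwm
  intro v hv hnd hlen hvm
  obtain ⟨σ, hσ⟩ := exists_perm_map_eq (l₂ := (finRange k).take m) hnd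
    ((take_sublist _ _).nodup (nodup_finRange k)) (by simp; omega)
  have hprefix : (finRange k).take m <+: v.map σ := by
    rw [← hσ, map_take]
    exact take_prefix _ _
  simpa using hN ⟨v.map σ, ⟨hv.map_equiv σ, hprefix, hvm.map_equiv σ⟩, rfl⟩

section Threshold

variable {A : Type*} {k : ℕ}

theorem sub_two_div_sub_three_lt {n : ℕ} (h : n + 5 ≤ k) :
    ((k : ℚ) - 2) / ((k : ℚ) - 3) < ((n : ℚ) + 2) / ((n : ℚ) + 1) := by
  have h' : (n : ℚ) + 5 ≤ k := by exact_mod_cast h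
  rw [div_lt_div_iff₀ (by linarith) (by positivity)]
  nlinarith

theorem getElem?_zero_eq_of_not_nodup {x : List A}
    (hx : APlusFree (((k : ℚ) - 2) / ((k : ℚ) - 3)) x) (hlen : x.length = k - 2)
    (hnd : ¬ x.Nodup) : x[0]? = x[k - 3]? := by
  obtain ⟨a, q, hinf⟩ := exists_cons_append_singleton_isInfix_of_not_nodup hnd
  have hq : k ≤ q.length + 4 := by
    by_contra hq
    exact hx.not_isInfix (sub_two_div_sub_three_lt (by omega))
      (isStrongAPower_cons_append_singleton a q) hinf
  have hle := hinf.length_le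
  simp only [length_cons, length_append] at hle
  rw [← hinf.eq_of_length (by simp; omega)]
  have hk : k - 3 = q.length + 1 := by omega
  simp [hk]

theorem length_lt_of_noPermFactor (hk : 5 ≤ k) {w : List A}
    (hw : APlusFree (((k : ℚ) - 2) / ((k : ℚ) - 3)) w) (hwm : NoPermFactor (k - 2) w) :
    w.length < 2 * (k - 3) := by
  by_contra hlen
  have hperiodic : ∀ i, i + (k - 3) < w.length → w[i]? = w[i + (k - 3)]? := by
    intro i hi
    have hinf := take_drop_isInfix i (k - 2) w
    have hwin : ((w.drop i).take (k - 2)).length = k - 2 := by simp; omega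
    have := getElem?_zero_eq_of_not_nodup (hw.of_isInfix hinf) hwin
      (hwm _ (isFactor_iff_isInfix.2 hinf) hwin)
    simpa [getElem?_take, show 0 < k - 2 by omega, show k - 3 < k - 2 by omega] using this
  have hu : w.take (k - 3) ≠ [] := ne_nil_of_length_pos (by simp; omega)
  exact hw.not_isInfix (by simpa using sub_two_div_sub_three_lt (n := 0) (by omega))
    (isStrongAPower_two_append_self hu)
    (append_self_take_prefix_of_periodic hperiodic (by omega)).isInfix

end Threshold

theorem statement_1 (k : ℕ) (hk : 6 ≤ k) :
    {w : List (Fin k) | APlusFree (((k : ℚ) - 2) / ((k : ℚ) - 3)) w}.Finite ↔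
      ({w : List (Fin k) | APlusFree (((k : ℚ) - 2) / ((k : ℚ) - 3)) w ∧
          (List.finRange k).take (k - 2) <+: w ∧
          ∀ x, IsFactor x w → x.length = k - 1 → ¬ x.Nodup}.Finite ∧
       {w : List (Fin k) | APlusFree (((k : ℚ) - 2) / ((k : ℚ) - 3)) w ∧
          (List.finRange k).take (k - 1) <+: w ∧
          ∀ x, IsFactor x w → x.length = k → ¬ x.Nodup}.Finite ∧
       {w : List (Fin k) | APlusFree (((k : ℚ) - 2) / ((k : ℚ) - 3)) w ∧
          List.finRange k <+: w}.Finite) := by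
  refine ⟨fun h => ⟨h.subset fun _ hw => hw.1, h.subset fun _ hw => hw.1,
    h.subset fun _ hw => hw.1⟩, fun ⟨h₁, h₂, h₃⟩ => ?_⟩
  have e₁ : k - 2 + 1 = k - 1 := by omega
  have e₂ : k - 1 + 1 = k := by omega
  have hk₀ : {w : List (Fin k) | APlusFree (((k : ℚ) - 2) / ((k : ℚ) - 3)) w ∧
      NoPermFactor (k - 2) w}.Finite :=
    (finite_length_le _ (2 * (k - 3))).subset fun _ ⟨hw, hwm⟩ =>
      (length_lt_of_noPermFactor (by omega) hw hwm).le
  have hk₁ := finite_noPermFactor_succ (m := k - 2) (by omega) (by omega) hk₀ (by rwa [e₁])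
  rw [e₁] at hk₁
  have hk₂ := finite_noPermFactor_succ (m := k - 1) (by omega) (by omega) hk₁ (by rwa [e₂])
  rw [e₂] at hk₂
  have hk₃ := finite_noPermFactor_succ (m := k) (by omega) le_rfl hk₂ <|
    h₃.subset fun w ⟨hw, hpre, _⟩ => ⟨hw, by rwa [take_of_length_le (by simp)] at hpre⟩
  exact hk₃.subset fun w hw => ⟨hw, noPermFactor_of_card_lt (by simp) w⟩
end

section
/- Let k ≥ 6 and let w be a ((k−2)/(k−3))⁺-A-free word over the alphabet Fin k. Then every factor u of w of length k−1 either has its first k−2 letters pairwise distinct or has its last k−2 letters pairwise distinct (i.e., u begins or ends with a (k−2)-permutation). -/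
lemma getElem_idx_congr {A : Type*} (l : List A) {i j : ℕ} (h : i = j) (hi : i < l.length) :
    l[i]'hi = l[j]'(h ▸ hi) := by subst h; rfl

lemma factor_trans {A : Type*} {x y z : List A} (h1 : IsFactor x y) (h2 : IsFactor y z) :
    IsFactor x z := by
  obtain ⟨p, s, rfl⟩ := h1
  obtain ⟨p', s', rfl⟩ := h2
  exact ⟨p' ++ p, s ++ s', by simp⟩

lemma factor_infix {A : Type*} (x : List A) (i n : ℕ) :
    IsFactor ((x.drop i).take n) x :=
  ⟨x.take i, (x.drop i).drop n, by
    rw [List.append_assoc, List.take_append_drop, List.take_append_drop]⟩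

lemma drop_last {A : Type*} (y : List A) (d : ℕ) (h : y.length = d + 1) :
    y.drop d = [y[d]'(by omega)] := by
  rw [List.drop_eq_getElem_cons (by omega)]
  simp [List.drop_eq_nil_of_le, h.le]

lemma take_one' {A : Type*} (y : List A) (h : 0 < y.length) : y.take 1 = [y[0]'h] := by
  rw [List.take_succ]
  simp [List.getElem?_eq_getElem h]

lemma take_nonempty {A : Type*} (y : List A) (n : ℕ) (h0 : 0 < n) (h1 : 0 < y.length) :
    y.take n ≠ [] := by
  intro h
  have h' := congrArg List.length h
  rw [List.length_take, List.length_nil] at h'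
  omega

lemma power_of_repeat {A : Type*} (y : List A) (d : ℕ) (hd : 1 ≤ d)
    (hlen : y.length = d + 1)
    (heq : y[0]'(by omega) = y[d]'(by omega)) :
    IsStrongAPower ((d + 1 : ℚ) / d) y := by
  have hdpos : (0 : ℚ) < d := by exact_mod_cast hd
  have hypos : 0 < y.length := by omega
  rcases eq_or_lt_of_le hd with h1 | h2
  · -- d = 1
    subst h1
    rcases y with _ | ⟨a, y⟩
    · simp at hlen
    rcases y with _ | ⟨b, y⟩
    · simp at hlen
    rcases y with _ | ⟨c, y⟩
    swap
    · simp only [List.length_cons] at hlen; omega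
    simp only [List.getElem_cons_zero, List.getElem_cons_succ] at heq
    subst heq
    refine ⟨[a], [[a]], [], by simp, by norm_num, by simp, by simp, by simp, by simp, ?_⟩
    push_cast
    norm_num
  · -- d ≥ 2
    have hd2 : (2:ℚ) ≤ d := by exact_mod_cast h2
    have htl : (y.take d).length = d := by simp [hlen]
    refine ⟨y.take d, [], y.drop d, take_nonempty y d (by omega) hypos, ?_, by simp, ?_, ?_,
      by simp, ?_⟩
    · simp only [List.length_nil, Nat.cast_zero, zero_add]
      rw [eq_comm, Int.floor_eq_iff]
      constructor
      · rw [Int.cast_one, le_div_iff₀ hdpos]; linarith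
      · rw [div_lt_iff₀ hdpos]; push_cast; linarith
    · rw [drop_last y d hlen]; simp only [List.length_singleton, htl]; omega
    · rw [drop_last y d hlen]
      simp only [List.length_singleton]
      rw [List.take_take, show min 1 d = 1 by omega, take_one' y hypos, heq]
    · rw [hlen, htl]
      push_cast
      field_simp

lemma not_nodup_exists {A : Type*} (l : List A) (h : ¬ l.Nodup) :
    ∃ i j : Fin l.length, (i:ℕ) < (j:ℕ) ∧ l.get i = l.get j := by
  rw [List.nodup_iff_injective_get] at h
  simp [Function.Injective] at h
  obtain ⟨i, j, hij, hne⟩ := h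
  rcases lt_or_gt_of_ne hne with h' | h'
  · exact ⟨i, j, h', hij⟩
  · exact ⟨j, i, h', hij.symm⟩

/-- key: in an A⁺-free word, repeats in a factor must be at distance ≥ k-3 -/
lemma repeat_far (k : ℕ) (hk : 6 ≤ k) (w : List (Fin k))
    (hw : APlusFree (((k : ℚ) - 2) / ((k : ℚ) - 3)) w)
    (u : List (Fin k)) (hu : IsFactor u w) (i j : ℕ) (hij : i < j) (hj : j < u.length)
    (heq : u[i]'(by omega) = u[j]'hj) : k - 3 ≤ j - i := by
  by_contra hlt
  have hd1 : 1 ≤ j - i := by omega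
  have hylen : ((u.drop i).take (j - i + 1)).length = (j - i) + 1 := by simp; omega
  have h0 : ((u.drop i).take (j - i + 1))[0]'(by omega) = u[i]'(by omega) := by
    simp only [List.getElem_take, List.getElem_drop]
    exact getElem_idx_congr u (by omega) _
  have hdy : ((u.drop i).take (j - i + 1))[j - i]'(by omega) = u[j]'hj := by
    simp only [List.getElem_take, List.getElem_drop]
    exact getElem_idx_congr u (by omega) _
  have hpow := power_of_repeat _ (j - i) hd1 hylen (by rw [h0, hdy, heq])
  have hfac : IsFactor ((u.drop i).take (j - i + 1)) w :=
    factor_trans (factor_infix u i (j - i + 1)) hu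
  refine hw _ hfac _ ?_ hpow
  have hk3 : (0:ℚ) < (k:ℚ) - 3 := by
    have : (6:ℚ) ≤ k := by exact_mod_cast hk
    linarith
  have hdpos : (0:ℚ) < ((j - i : ℕ):ℚ) := by exact_mod_cast hd1
  rw [div_lt_div_iff₀ hk3 hdpos]
  have hdlt : ((j - i : ℕ):ℚ) < (k:ℚ) - 3 := by
    have h' : (j - i) + 3 < k := by omega
    have := (Nat.cast_lt (α := ℚ)).mpr h'
    push_cast at this
    linarith
  nlinarith

theorem statement_4 (k : ℕ) (hk : 6 ≤ k) (w : List (Fin k))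
    (hw : APlusFree (((k : ℚ) - 2) / ((k : ℚ) - 3)) w)
    (u : List (Fin k)) (hu : IsFactor u w) (hlen : u.length = k - 1) :
    (u.take (k - 2)).Nodup ∨ (u.drop 1).Nodup := by
  by_contra hcon
  push_neg at hcon
  obtain ⟨h1, h2⟩ := hcon
  obtain ⟨i1, j1, hij1, he1⟩ := not_nodup_exists _ h1
  obtain ⟨i2, j2, hij2, he2⟩ := not_nodup_exists _ h2
  have hl1 : (u.take (k-2)).length = k - 2 := by simp [hlen]; omega
  have hl2 : (u.drop 1).length = k - 2 := by simp [hlen]; omega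
  have hj1b : (j1 : ℕ) < k - 2 := by have := j1.2; omega
  have hj2b : (j2 : ℕ) < k - 2 := by have := j2.2; omega
  have hj1' : (j1 : ℕ) < u.length := by omega
  have hi1' : (i1 : ℕ) < u.length := by omega
  have he1' : u[(i1:ℕ)]'hi1' = u[(j1:ℕ)]'hj1' := by
    have := he1
    simp only [List.get_eq_getElem, List.getElem_take] at this
    exact this
  have hj2' : 1 + (j2 : ℕ) < u.length := by omega
  have he2' : u[1 + (i2:ℕ)]'(by omega) = u[1 + (j2:ℕ)]'hj2' := by
    have := he2
    simp only [List.get_eq_getElem, List.getElem_drop] at this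
    exact this
  have hb1 := repeat_far k hk w hw u hu i1 j1 hij1 hj1' he1'
  have hb2 := repeat_far k hk w hw u hu (1+i2) (1+j2) (by omega) hj2' he2'
  have hq1 : (i1:ℕ) = 0 ∧ (j1:ℕ) = k - 3 := by omega
  have hq2 : (i2:ℕ) = 0 ∧ (j2:ℕ) = k - 3 := by omega
  have e1 : u[0]'(by omega) = u[k-3]'(by omega) := by
    have h := he1'
    simp only [hq1.1, hq1.2] at h
    exact h
  have e2 : u[1]'(by omega) = u[k-2]'(by omega) := by
    have h := he2'
    simp only [hq2.1, hq2.2] at h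
    rw [getElem_idx_congr u (show 1 + (k-3) = k - 2 by omega)] at h
    exact h
  have hkQ : (6:ℚ) ≤ k := by exact_mod_cast hk
  have hk3 : (0:ℚ) < (k:ℚ) - 3 := by linarith
  have hpow : IsStrongAPower (((k:ℚ) - 1) / ((k:ℚ) - 3)) u := by
    have htl : (u.take (k-3)).length = k - 3 := by simp [hlen]; omega
    have hdl : (u.drop (k-3)).length = 2 := by simp [hlen]; omega
    refine ⟨u.take (k-3), [], u.drop (k-3),
      take_nonempty u (k-3) (by omega) (by omega), ?_, by simp, ?_, ?_, by simp, ?_⟩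
    · simp only [List.length_nil, Nat.cast_zero, zero_add]
      rw [eq_comm, Int.floor_eq_iff]
      constructor
      · rw [Int.cast_one, le_div_iff₀ hk3]; linarith
      · rw [div_lt_iff₀ hk3]; push_cast; linarith
    · rw [hdl, htl]; omega
    · rw [hdl, List.take_take, show min 2 (k-3) = 2 by omega]
      have heqlist : u.drop (k-3) = u.take 2 := by
        apply List.ext_getElem
        · rw [hdl]; simp [hlen]; omega
        · intro n hn hn'
          simp only [List.getElem_drop, List.getElem_take]
          have hn2 : n < 2 := by rw [hdl] at hn; omega
          interval_cases n
          · exact e1.symm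
          · rw [getElem_idx_congr u (show k - 3 + 1 = k - 2 by omega)]
            exact e2.symm
      rw [heqlist]
    · rw [hlen, htl]
      have c1 : ((k - 1 : ℕ) : ℚ) = (k:ℚ) - 1 := by
        have h1' : 1 ≤ k := by omega
        push_cast [h1']; ring
      have c3 : ((k - 3 : ℕ) : ℚ) = (k:ℚ) - 3 := by
        have h3' : 3 ≤ k := by omega
        push_cast [h3']; ring
      rw [c1, c3]
      field_simp
  refine hw u hu _ ?_ hpow
  exact (div_lt_div_iff_of_pos_right hk3).mpr (by linarith)
end

section
/- Let α be a rational number with 1 < α < 2, and let u be a word over a finite alphabet all of whose proper prefixes are α-A-free. Then u is α-A-free if and only if no suffix of u can be written as x ++ y ++ z with z nonempty, x ~ z, and |x ++ y ++ z| ≥ α·|x ++ y|. (This is the correctness criterion (⋆) underlying Algorithm 2.) -/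
private lemma two_power {A : Type*} {a b : List A} (ha : a ≠ []) (hb : b.Perm a) :
    IsStrongAPower 2 (a ++ b) := by
  refine ⟨a, [b], [], ha, by norm_num, by simpa using hb,
    by simpa using List.length_pos_iff.mpr ha, by simp, by simp, ?_⟩
  have := hb.length_eq
  push_cast [List.length_append, this]
  ring

theorem statement_7 {A : Type*} [Fintype A] (α : ℚ) (hα₁ : 1 < α) (hα₂ : α < 2)
    (u : List A) (hpre : ∀ v : List A, v <+: u → v ≠ u → AFree α v) :
    AFree α u ↔
      ¬ ∃ (p x y z : List A), u = p ++ (x ++ y ++ z) ∧ z ≠ [] ∧ x.Perm z ∧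
        α * ((x.length : ℚ) + (y.length : ℚ)) ≤
          (x.length : ℚ) + (y.length : ℚ) + (z.length : ℚ) := by
  have hα2 : α ≤ 2 := le_of_lt hα₂
  constructor
  · rintro hfree ⟨p, x, y, z, hu, hz, hperm, hineq⟩
    have hx : x ≠ [] := by
      intro h; subst h
      exact hz (List.eq_nil_of_length_eq_zero (by simpa using hperm.length_eq.symm))
    have hfac : IsFactor (x ++ y ++ z) u := ⟨p, [], by simp [hu]⟩
    by_cases hy : y = []
    · subst hy
      have h2 := two_power hx hperm.symm
      have h3 : IsStrongAPower 2 (x ++ [] ++ z) := by simpa using h2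
      exact hfree _ hfac 2 hα2 h3
    · have hzx : z.length = x.length := hperm.length_eq.symm
      have hxq : (0:ℚ) < x.length := by exact_mod_cast List.length_pos_iff.mpr hx
      have hyq : (0:ℚ) < y.length := by exact_mod_cast List.length_pos_iff.mpr hy
      have hdpos : (0:ℚ) < (x.length:ℚ) + y.length := by linarith
      set γ : ℚ := ((x.length:ℚ) + y.length + z.length) / ((x.length:ℚ) + y.length)
        with hγdef
      have hγα : α ≤ γ := by rw [hγdef, le_div_iff₀ hdpos]; linarith
      refine hfree _ hfac γ hγα ⟨x ++ y, [], z, by simp [hx], ?_, by simp, ?_, ?_, by simp, ?_⟩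
      · have h1 : (1:ℚ) ≤ γ := le_trans hα₁.le hγα
        have h2 : γ < 2 := by
          rw [hγdef, div_lt_iff₀ hdpos]; push_cast [hzx]; linarith
        have hfl : ⌊γ⌋ = 1 := by
          rw [Int.floor_eq_iff]; constructor <;> push_cast <;> linarith
        simp [hfl]
      · simp only [List.length_append, hzx]
        exact Nat.lt_add_of_pos_right (List.length_pos_iff.mpr hy)
      · rw [hzx, List.take_left]; exact hperm.symm
      · have hlq : ((x ++ y).length : ℚ) = (x.length:ℚ) + y.length := by
          push_cast [List.length_append]; ring
        rw [hγdef, hlq]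
        push_cast [List.length_append]
        rw [div_mul_cancel₀ _ hdpos.ne']
  · intro hno w hfacw γ hγ hpow
    obtain ⟨p, s, hu⟩ := hfacw
    rcases eq_or_ne s [] with hs | hs
    swap
    · have hpref : p ++ w <+: u := ⟨s, by rw [hu, List.append_assoc]⟩
      have hne : p ++ w ≠ u := by
        intro h
        have h1' := congrArg List.length hu
        have h2' := congrArg List.length h
        simp [List.length_append] at h1' h2'
        exact hs (List.eq_nil_of_length_eq_zero (by omega))
      exact hpre _ hpref hne w ⟨p, [], by simp⟩ γ hγ hpow
    · subst hs
      have hu' : u = p ++ w := by simpa using hu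
      clear hu
      rcases hpow with ⟨u₁, us, u', h1, h2, h3, h4, h5, h6, h7⟩
      have hα1γ : (1:ℚ) < γ := lt_of_lt_of_le hα₁ hγ
      have hu1q : (0:ℚ) < u₁.length := by exact_mod_cast List.length_pos_iff.mpr h1
      rcases eq_or_ne us [] with hus | hus
      · subst hus
        have hw : w = u₁ ++ u' := by simpa using h6
        have hwlen : ((u₁.length:ℚ) + u'.length) = γ * u₁.length := by
          rw [← h7, hw]; push_cast [List.length_append]; ring
        have hune : u' ≠ [] := by
          intro h; subst h
          simp at hwlen
          nlinarith
        refine hno ⟨p, u₁.take u'.length, u₁.drop u'.length, u', ?_, hune, h5.symm, ?_⟩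
        · rw [hu', hw, List.take_append_drop]
        · have hlen : (u₁.take u'.length).length + (u₁.drop u'.length).length
              = u₁.length := by
            simp [List.length_take, List.length_drop]; omega
          have hlenq : ((u₁.take u'.length).length : ℚ) + (u₁.drop u'.length).length
              = (u₁.length : ℚ) := by exact_mod_cast hlen
          rw [hlenq]
          have := mul_le_mul_of_nonneg_right hγ hu1q.le
          linarith
      · obtain ⟨zl, us', rfl⟩ : ∃ zl us', us = us' ++ [zl] := by
          rcases List.eq_nil_or_concat us with h | ⟨us', zl, h⟩
          · exact absurd h hus
          · exact ⟨zl, us', by simpa [List.concat_eq_append] using h⟩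
        obtain ⟨init, a, hinit⟩ : ∃ init a, u₁ :: us' = init ++ [a] := by
          rcases List.eq_nil_or_concat (u₁ :: us') with h | h
          · simp at h
          · obtain ⟨L, b, hh⟩ := h
            exact ⟨L, b, by simpa [List.concat_eq_append] using hh⟩
        have ha : a.Perm u₁ := by
          have hmem : a ∈ u₁ :: us' := by rw [hinit]; simp
          rcases List.mem_cons.mp hmem with rfl | hmem'
          · exact List.Perm.refl _
          · exact h3 a (by simp [hmem'])
        have hzl : zl.Perm u₁ := h3 zl (by simp)
        have hane : a ≠ [] := by
          intro h; rw [h] at ha; exact h1 ha.symm.eq_nil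
        have hzlne : zl ≠ [] := by
          intro h; rw [h] at hzl; exact h1 hzl.symm.eq_nil
        have hflat : (u₁ :: (us' ++ [zl])).flatten = init.flatten ++ (a ++ zl) := by
          rw [show u₁ :: (us' ++ [zl]) = (init ++ [a]) ++ [zl] from by
            rw [← hinit]; rfl]
          simp
        rcases eq_or_ne u' [] with rfl | hune
        · refine hno ⟨p ++ init.flatten, a, [], zl, ?_, hzlne, ha.trans hzl.symm, ?_⟩
          · rw [hu', h6, hflat]; simp [List.append_assoc]
          · have hlz : (zl.length : ℚ) = a.length := by
              exact_mod_cast (hzl.trans ha.symm).length_eq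
            have haq : (0:ℚ) ≤ (a.length:ℚ) := by positivity
            simp [hlz]
            nlinarith
        · have hv : p ++ (u₁ :: (us' ++ [zl])).flatten <+: u :=
            ⟨u', by rw [hu', h6, List.append_assoc]⟩
          have hvne : p ++ (u₁ :: (us' ++ [zl])).flatten ≠ u := by
            intro h
            have h1' := congrArg List.length hu'
            have h2' := congrArg List.length h
            rw [h6] at h1'
            simp [List.length_append] at h1' h2'
            exact hune (List.eq_nil_of_length_eq_zero (by omega))
          refine hpre _ hv hvne (a ++ zl) ⟨p ++ init.flatten, [], ?_⟩ 2 hα2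
            (two_power hane (hzl.trans ha.symm))
          rw [hflat]; simp [List.append_assoc]
end

section
/- Let α be a rational number with 2 < α < 3, and let u be a word over a finite alphabet all of whose proper prefixes are α-A-free. Then u is α-A-free if and only if no suffix of u can be written as x ++ y ++ z with 0 < |x| ≤ |y|, x ~ z, x ++ y an Abelian square, and 2·|x ++ y ++ z| ≥ α·|x ++ y|. (This is the correctness criterion (∗) underlying Algorithm 4.) -/
/-- An Abelian square: a word of the form `w₁ ++ w₂` with `w₁` nonempty and `w₁ ~ w₂`. -/
def IsAbelianSquare {A : Type*} (w : List A) : Prop :=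
  ∃ w₁ w₂ : List A, w = w₁ ++ w₂ ∧ w₁ ≠ [] ∧ w₁.Perm w₂

/-!
A strong Abelian `γ`-power with `2 < γ < 3` has the shape `u₁ u₂ u'` with `u₁ ~ u₂` and `u'`
Abelian equivalent to a prefix `x` of `u₁`; writing `u₁ u₂ = x y`, it is exactly a triple
`x, y, z = u'` as in the criterion, with `γ · |xy| = 2 · |xyz|`. Conversely such a triple is a
strong Abelian power of exponent `|xyz| / |u₁| ≥ α`, a cube when `|z| = |u₁|`. A power of
exponent `≥ 3` begins with an Abelian cube `u₁ u₂ u₃`, which is a triple of the criterion when it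
is a suffix of `u`, and otherwise lies in a proper prefix of `u`; since `α < 3` it is forbidden
either way. Factors of `u` that are not suffixes also lie in proper prefixes.
-/

section

variable {A : Type*}

/-- The triples `x, y, z` of the criterion (∗). -/
def IsAbelianSquareExtension (α : ℚ) (x y z : List A) : Prop :=
  x ≠ [] ∧ x.length ≤ y.length ∧ x.Perm z ∧ IsAbelianSquare (x ++ y) ∧
    α * ((x.length : ℚ) + (y.length : ℚ)) ≤
      2 * ((x.length : ℚ) + (y.length : ℚ) + (z.length : ℚ))

theorem IsAbelianSquareExtension.of_le {α β : ℚ} {x y z : List A} (hβα : β ≤ α)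
    (h : IsAbelianSquareExtension α x y z) : IsAbelianSquareExtension β x y z := by
  obtain ⟨hx, hxy, hxz, hsq, hlen⟩ := h
  refine ⟨hx, hxy, hxz, hsq, le_trans ?_ hlen⟩
  exact mul_le_mul_of_nonneg_right hβα (by positivity)

theorem isAbelianSquareExtension_cube {u₁ u₂ u₃ : List A} (h₁ : u₁ ≠ [])
    (h₂ : u₂.Perm u₁) (h₃ : u₃.Perm u₁) : IsAbelianSquareExtension 3 u₁ u₂ u₃ := by
  refine ⟨h₁, h₂.length_eq.ge, h₃.symm, ⟨u₁, u₂, rfl, h₁, h₂.symm⟩, ?_⟩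
  rw [h₂.length_eq, h₃.length_eq]
  linarith

theorem length_flatten_of_forall_perm {u₁ : List A} {us : List (List A)}
    (hus : ∀ u ∈ us, u.Perm u₁) : ((u₁ :: us).flatten.length : ℚ) = (us.length + 1) * u₁.length := by
  have hmap : us.map List.length = us.map fun _ => u₁.length :=
    List.map_congr_left fun u hu => (hus u hu).length_eq
  rw [List.flatten_cons, List.length_append, List.length_flatten, hmap, List.map_const',
    List.sum_replicate, smul_eq_mul]
  push_cast
  ring

theorem isStrongAPower_flatten_append {u₁ u' : List A} {us : List (List A)} (h₁ : u₁ ≠ [])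
    (hus : ∀ u ∈ us, u.Perm u₁) (hlt : u'.length < u₁.length)
    (hu' : u'.Perm (u₁.take u'.length)) :
    IsStrongAPower ((us.length + 1 : ℚ) + u'.length / u₁.length) ((u₁ :: us).flatten ++ u') := by
  have ha : (0 : ℚ) < u₁.length := by exact_mod_cast List.length_pos_iff.mpr h₁
  have hr : (u'.length : ℚ) / u₁.length < 1 := (div_lt_one ha).mpr (by exact_mod_cast hlt)
  refine ⟨u₁, us, u', h₁, ?_, hus, hlt, hu', rfl, ?_⟩
  · symm
    rw [Int.floor_eq_iff]
    push_cast
    constructor <;> linarith [div_nonneg (Nat.cast_nonneg (α := ℚ) u'.length) ha.le]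
  · rw [List.length_append, Nat.cast_add, length_flatten_of_forall_perm hus]
    field_simp

theorem isStrongAPower_cube {u₁ u₂ u₃ : List A} (h₁ : u₁ ≠ [])
    (h₂ : u₂.Perm u₁) (h₃ : u₃.Perm u₁) : IsStrongAPower 3 (u₁ ++ u₂ ++ u₃) := by
  have h := isStrongAPower_flatten_append (us := [u₂, u₃]) (u' := []) h₁ (by simp [h₂, h₃])
    (List.length_pos_iff.mpr h₁) (by simp)
  convert h using 1
  · norm_num
  · simp

theorem IsAbelianSquareExtension.exists_isStrongAPower {α : ℚ} {x y z : List A}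
    (h : IsAbelianSquareExtension α x y z) : ∃ γ, α ≤ γ ∧ IsStrongAPower γ (x ++ y ++ z) := by
  obtain ⟨hx, hxy, hxz, ⟨w₁, w₂, hw, hw₁, hperm⟩, hlen⟩ := h
  have ha : (0 : ℚ) < w₁.length := by exact_mod_cast List.length_pos_iff.mpr hw₁
  have hsum : x.length + y.length = 2 * w₁.length := by
    have := congrArg List.length hw
    simp only [List.length_append] at this
    have := hperm.length_eq
    omega
  have hxw₁ : x.length ≤ w₁.length := by omega
  have hxtake : w₁.take x.length = x := by
    simpa [hw, List.take_append_of_le_length hxw₁] using (List.take_left (l₁ := x) (l₂ := y))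
  have hzx : z.length = x.length := hxz.length_eq.symm
  have hlen' : α * (2 * w₁.length) ≤ 2 * (2 * w₁.length + z.length) := by
    exact_mod_cast (show α * ((2 * w₁.length : ℕ) : ℚ) ≤ 2 * ((2 * w₁.length : ℕ) + z.length) by
      rw [← hsum]; push_cast; linarith)
  rcases hxw₁.lt_or_eq with hlt | heq
  · refine ⟨2 + z.length / w₁.length, ?_, ?_⟩
    · rw [← sub_le_iff_le_add', le_div_iff₀ ha]
      linarith
    · have h := isStrongAPower_flatten_append (us := [w₂]) (u' := z) hw₁ (by simp [hperm.symm])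
        (hzx ▸ hlt) (by rw [hzx, hxtake]; exact hxz.symm)
      convert h using 1
      · norm_num
      · simp [hw]
  · have hxw : x = w₁ := by rw [← hxtake, heq, List.take_length]
    subst hxw
    obtain rfl : y = w₂ := List.append_cancel_left hw
    refine ⟨3, ?_, isStrongAPower_cube hx hperm.symm hxz.symm⟩
    rw [hzx, ← heq] at hlen'
    nlinarith

theorem IsStrongAPower.exists_isAbelianSquareExtension {γ : ℚ} {w : List A}
    (h : IsStrongAPower γ w) (h2 : 2 < γ) (h3 : γ < 3) :
    ∃ x y z, w = x ++ y ++ z ∧ IsAbelianSquareExtension γ x y z := by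
  obtain ⟨u₁, us, u', h₁, hfloor, hus, hlt, hu', rfl, hlen⟩ := h
  have hfloor2 : ⌊γ⌋ = 2 := by rw [Int.floor_eq_iff]; push_cast; constructor <;> linarith
  obtain ⟨u₂, rfl⟩ : ∃ u₂, us = [u₂] := List.length_eq_one_iff.mp (by omega)
  have h₂ : u₂.Perm u₁ := hus u₂ (by simp)
  have ha : (0 : ℚ) < u₁.length := by exact_mod_cast List.length_pos_iff.mpr h₁
  set n := u'.length
  have hγ : γ * u₁.length = 2 * u₁.length + n := by
    rw [← hlen]; simp [h₂.length_eq]; ring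
  have hn : 0 < n := by
    by_contra! hn
    have : (n : ℚ) = 0 := by exact_mod_cast Nat.le_zero.mp hn
    nlinarith
  have hsplit : u₁.take n ++ (u₁.drop n ++ u₂) = u₁ ++ u₂ := by
    rw [← List.append_assoc, List.take_append_drop]
  refine ⟨u₁.take n, u₁.drop n ++ u₂, u', by simp [← hsplit], ?_, ?_, hu'.symm,
    ⟨u₁, u₂, hsplit, h₁, h₂.symm⟩, ?_⟩
  · rw [← List.length_pos_iff, List.length_take]
    omega
  · simp [h₂.length_eq]
  · have hxy : ((u₁.take n).length : ℚ) + ((u₁.drop n ++ u₂).length : ℚ) = 2 * u₁.length := by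
      simp only [List.length_take, List.length_drop, List.length_append, h₂.length_eq]
      push_cast [min_eq_left hlt.le, Nat.cast_sub hlt.le]
      ring
    rw [hxy]
    linarith

theorem IsStrongAPower.exists_cube_prefix {γ : ℚ} {w : List A} (h : IsStrongAPower γ w)
    (h3 : 3 ≤ γ) :
    ∃ u₁ u₂ u₃ t, w = u₁ ++ u₂ ++ u₃ ++ t ∧ u₁ ≠ [] ∧ u₂.Perm u₁ ∧ u₃.Perm u₁ := by
  obtain ⟨u₁, us, u', h₁, hfloor, hus, -, -, rfl, -⟩ := h
  have : (3 : ℤ) ≤ ⌊γ⌋ := Int.le_floor.mpr (by exact_mod_cast h3)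
  match us, hfloor, hus with
  | u₂ :: u₃ :: rest, _, hus =>
    exact ⟨u₁, u₂, u₃, rest.flatten ++ u', by simp, h₁, hus u₂ (by simp), hus u₃ (by simp)⟩
  | [], hfloor, _ | [_], hfloor, _ => simp at hfloor; omega

end

theorem statement_9_general {A : Type*} (α : ℚ) (hα₁ : 2 < α) (hα₂ : α < 3)
    (u : List A) (hpre : ∀ v : List A, v <+: u → v ≠ u → AFree α v) :
    AFree α u ↔
      ¬ ∃ (p x y z : List A), u = p ++ (x ++ y ++ z) ∧
        x ≠ [] ∧ x.length ≤ y.length ∧ x.Perm z ∧ IsAbelianSquare (x ++ y) ∧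
        α * ((x.length : ℚ) + (y.length : ℚ)) ≤
          2 * ((x.length : ℚ) + (y.length : ℚ) + (z.length : ℚ)) := by
  have hfree_of_append : ∀ v s, u = v ++ s → s ≠ [] → AFree α v := fun v s hu hs =>
    hpre v ⟨s, hu.symm⟩ fun hv => hs (List.append_right_eq_self.mp (hv.trans hu).symm)
  constructor
  · rintro hfree ⟨p, x, y, z, rfl, hxyz⟩
    obtain ⟨γ, hαγ, hpow⟩ := IsAbelianSquareExtension.exists_isStrongAPower hxyz
    exact hfree _ ⟨p, [], by simp⟩ γ hαγ hpow
  · rintro hno w ⟨p, s, hu⟩ γ hαγ hpow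
    obtain rfl | hs := eq_or_ne s []
    · rw [List.append_nil] at hu
      rcases lt_or_ge γ 3 with hγ3 | hγ3
      · obtain ⟨x, y, z, rfl, hxyz⟩ := hpow.exists_isAbelianSquareExtension (by linarith) hγ3
        exact hno ⟨p, x, y, z, hu, hxyz.of_le hαγ⟩
      · obtain ⟨u₁, u₂, u₃, t, rfl, h₁, h₂, h₃⟩ := hpow.exists_cube_prefix hγ3
        obtain rfl | ht := eq_or_ne t []
        · exact hno ⟨p, u₁, u₂, u₃, by simpa using hu,
            (isAbelianSquareExtension_cube h₁ h₂ h₃).of_le hα₂.le⟩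
        · exact hfree_of_append (p ++ (u₁ ++ u₂ ++ u₃)) t (by simp [hu]) ht _ ⟨p, [], by simp⟩
            3 hα₂.le (isStrongAPower_cube h₁ h₂ h₃)
    · exact hfree_of_append (p ++ w) s hu hs w ⟨p, [], by simp⟩ γ hαγ hpow

theorem statement_9 {A : Type*} [Fintype A] (α : ℚ) (hα₁ : 2 < α) (hα₂ : α < 3)
    (u : List A) (hpre : ∀ v : List A, v <+: u → v ≠ u → AFree α v) :
    AFree α u ↔
      ¬ ∃ (p x y z : List A), u = p ++ (x ++ y ++ z) ∧
        x ≠ [] ∧ x.length ≤ y.length ∧ x.Perm z ∧ IsAbelianSquare (x ++ y) ∧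
        α * ((x.length : ℚ) + (y.length : ℚ)) ≤
          2 * ((x.length : ℚ) + (y.length : ℚ) + (z.length : ℚ)) :=
  statement_9_general α hα₁ hα₂ u hpre
end

section
/- Let α be a rational number with 2 < α < 3, and let u be a word over a finite alphabet all of whose proper prefixes are dual α-A-free. Then u is dual α-A-free if and only if no suffix of u can be written as x ++ y ++ z with z nonempty, y ~ z, x Abelian equivalent to the suffix of z of length |x|, and |x ++ y ++ z| ≥ α·|z|. (This is the correctness criterion (†) underlying Algorithm 5.) -/
/-- `w` is dual `β`-A-free: no factor of `w` is a dual strong Abelian `γ`-power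
(i.e. has a reversal that is a strong Abelian `γ`-power) for a rational `γ ≥ β`. -/
def DualAFree {A : Type*} (β : ℚ) (w : List A) : Prop :=
  ∀ x, IsFactor x w → ∀ γ : ℚ, β ≤ γ → ¬ IsStrongAPower γ x.reverse

/-!
A factor of `u` is either a suffix of `u` or a factor of a proper prefix, so under the
hypothesis on proper prefixes only suffixes `w` with `w.reverse` a strong Abelian `γ`-power
(`γ ≥ α`) matter. Reversing, such a power begins with `x ++ y ++ z` where `y ~ x`, `z` is
Abelian equivalent to a prefix of `x`, and `|x ++ y ++ z| ≥ α |x|`: take the first three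
blocks if `⌊γ⌋ ≥ 3` (enough since `α < 3`), and the two blocks and the tail if `⌊γ⌋ = 2`.
Conversely such an `x ++ y ++ z` is itself a strong Abelian `|x ++ y ++ z| / |x|`-power.
-/

lemma List.perm_take_reverse {A : Type*} (l : List A) (n : ℕ) :
    (l.reverse.take n).Perm (l.drop (l.length - n)) := by
  rw [take_reverse]
  exact reverse_perm _

section

open List

variable {A : Type*}

lemma IsFactor.isSuffix_or_exists_isPrefix {x u : List A} (h : IsFactor x u) :
    x <:+ u ∨ ∃ v, v <+: u ∧ v ≠ u ∧ IsFactor x v := by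
  obtain ⟨p, s, rfl⟩ := h
  rcases eq_or_ne s [] with rfl | hs
  · exact .inl ⟨p, by simp⟩
  · exact .inr ⟨p ++ x, ⟨s, rfl⟩, by simpa using hs, p, [], by simp⟩

lemma isStrongAPower_append_append {x y z : List A} (hx : x ≠ []) (hy : y.Perm x)
    (hz : z.Perm (x.take z.length)) :
    IsStrongAPower (((x ++ y ++ z).length : ℚ) / x.length) (x ++ y ++ z) := by
  have hxpos : (0 : ℚ) < x.length := by exact_mod_cast length_pos_iff.mpr hx
  have hzx : z.length ≤ x.length := by
    have := hz.length_eq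
    rw [length_take] at this
    omega
  have hyx : y.length = x.length := hy.length_eq
  have hlen : (((x ++ y ++ z).length : ℚ) / x.length) * x.length = (x ++ y ++ z).length :=
    div_mul_cancel₀ _ hxpos.ne'
  rcases hzx.lt_or_eq with hlt | heq
  · have hfloor : ⌊((x ++ y ++ z).length : ℚ) / x.length⌋ = 2 := by
      have hzq : (z.length : ℚ) < x.length := by exact_mod_cast hlt
      rw [Int.floor_eq_iff, le_div_iff₀ hxpos, div_lt_iff₀ hxpos]
      simp only [length_append, Nat.cast_add, hyx]
      push_cast
      constructor <;> linarith
    exact ⟨x, [y], z, hx, by rw [hfloor]; rfl, by simpa using hy, hlt, hz, by simp, hlen.symm⟩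
  · have hfloor : ⌊((x ++ y ++ z).length : ℚ) / x.length⌋ = 3 := by
      have : ((x ++ y ++ z).length : ℚ) = 3 * x.length := by
        simp only [length_append, Nat.cast_add, hyx, heq]
        ring
      rw [this, mul_div_cancel_right₀ _ hxpos.ne']
      norm_num
    have hz' : z.Perm x := by rwa [heq, take_length] at hz
    refine ⟨x, [y, z], [], hx, by rw [hfloor]; rfl, by simpa using ⟨hy, hz'⟩,
      length_pos_iff.mpr hx, by simp, by simp, hlen.symm⟩

lemma IsStrongAPower.exists_eq_append {α γ : ℚ} {w : List A} (h : IsStrongAPower γ w)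
    (h2 : 2 ≤ γ) (hαγ : α ≤ γ) (hα3 : α ≤ 3) :
    ∃ x y z s, w = x ++ y ++ z ++ s ∧ x ≠ [] ∧ y.Perm x ∧ z.Perm (x.take z.length) ∧
      α * x.length ≤ (x ++ y ++ z).length := by
  obtain ⟨x, us, u', hx, hk, hperm, -, hu', rfl, hlen⟩ := h
  obtain ⟨y, rest, rfl⟩ : ∃ y rest, us = y :: rest := by
    refine ⟨us.head ?_, us.tail, (cons_head_tail _).symm⟩
    rintro rfl
    have : (2 : ℤ) ≤ ⌊γ⌋ := Int.le_floor.mpr (by exact_mod_cast h2)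
    simp at hk
    omega
  have hy : y.Perm x := hperm y (by simp)
  cases rest with
  | nil =>
    refine ⟨x, y, u', [], by simp, hx, hy, hu', ?_⟩
    simpa [← hlen] using mul_le_mul_of_nonneg_right hαγ (Nat.cast_nonneg (α := ℚ) x.length)
  | cons z rest =>
    have hz : z.Perm x := hperm z (by simp)
    refine ⟨x, y, z, rest.flatten ++ u', by simp, hx, hy,
      by rwa [hz.length_eq, take_length], ?_⟩
    simp only [length_append, Nat.cast_add, hy.length_eq, hz.length_eq]
    linarith [mul_le_mul_of_nonneg_right hα3 (Nat.cast_nonneg (α := ℚ) x.length)]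

end

open List in
theorem statement_10_general {A : Type*} (α : ℚ) (hα₁ : 2 < α) (hα₂ : α < 3)
    (u : List A) (hpre : ∀ v : List A, v <+: u → v ≠ u → DualAFree α v) :
    DualAFree α u ↔
      ¬ ∃ (p x y z : List A), u = p ++ (x ++ y ++ z) ∧ z ≠ [] ∧ y.Perm z ∧
        x.Perm (z.drop (z.length - x.length)) ∧
        α * (z.length : ℚ) ≤ (x.length : ℚ) + (y.length : ℚ) + (z.length : ℚ) := by
  constructor
  · rintro hfree ⟨p, x, y, z, rfl, hz, hyz, hxz, hlen⟩
    have hpow := isStrongAPower_append_append (x := z.reverse) (y := y.reverse) (z := x.reverse)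
      (by simpa using hz) (by simpa using hyz)
      (by simpa using (reverse_perm x).trans (hxz.trans (perm_take_reverse z _).symm))
    have hrev : (x ++ y ++ z).reverse = z.reverse ++ y.reverse ++ x.reverse := by simp
    refine hfree _ ⟨p, [], by simp⟩ _ ?_ (hrev ▸ hpow)
    have hzpos : (0 : ℚ) < z.length := by exact_mod_cast length_pos_iff.mpr hz
    rw [le_div_iff₀ (by simpa using hzpos)]
    simp only [length_append, length_reverse, Nat.cast_add]
    linarith
  · intro hno w hw γ hγ hpow
    rcases hw.isSuffix_or_exists_isPrefix with ⟨p, rfl⟩ | ⟨v, hv, hvu, hwv⟩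
    · obtain ⟨x, y, z, s, hxyz, hx, hyx, hzx, hlen⟩ :=
        hpow.exists_eq_append (by linarith) hγ hα₂.le
      refine hno ⟨p ++ s.reverse, z.reverse, y.reverse, x.reverse, ?_, by simpa using hx,
        by simpa using hyx, ?_, ?_⟩
      · rw [← reverse_reverse w, hxyz]
        simp
      · have := perm_take_reverse x.reverse z.length
        rw [reverse_reverse] at this
        simpa using (reverse_perm z).trans (hzx.trans this)
      · simp only [length_reverse]
        simpa [add_comm, add_left_comm] using hlen
    · exact hpre v hv hvu w hwv γ hγ hpow

theorem statement_10 {A : Type*} [Fintype A] (α : ℚ) (hα₁ : 2 < α) (hα₂ : α < 3)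
    (u : List A) (hpre : ∀ v : List A, v <+: u → v ≠ u → DualAFree α v) :
    DualAFree α u ↔
      ¬ ∃ (p x y z : List A), u = p ++ (x ++ y ++ z) ∧ z ≠ [] ∧ y.Perm z ∧
        x.Perm (z.drop (z.length - x.length)) ∧
        α * (z.length : ℚ) ≤ (x.length : ℚ) + (y.length : ℚ) + (z.length : ℚ) :=
  statement_10_general α hα₁ hα₂ u hpre
end

section
/- There exists a constant C > 0 such that for every ℓ ≥ 1, the number of pairs (u, v) of words of length ℓ over the 3-letter alphabet Fin 3 with u ~ v is at most C·9^ℓ/ℓ. Equivalently, the probability that two independent uniformly random ternary words of length ℓ are Abelian equivalent is O(1/ℓ). -/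
open Finset

lemma count_filter_card {α} [DecidableEq α] (l : List α) (c : α) :
    (Finset.univ.filter fun i : Fin l.length => l.get i = c).card = l.count c := by
  conv_rhs => rw [← List.ofFn_get l, List.ofFn_eq_map]
  rw [List.count, List.countP_map, Fin.univ_def]
  simp [Finset.filter, Finset.card, Multiset.countP_eq_card_filter]
  rw [← List.countP_eq_length_filter]
  congr 1

lemma count_filter_card' {α} [DecidableEq α] {n : ℕ} (l : List α) (h : l.length = n) (c : α) :
    (Finset.univ.filter fun i : Fin n => l.get (Fin.cast h.symm i) = c).card = l.count c := by
  subst h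
  simpa using count_filter_card l c

lemma lemA (m : ℕ) : Nat.centralBinom m ^ 2 * (2 * m + 1) ≤ 16 ^ m := by
  induction m with
  | zero => simp [Nat.centralBinom]
  | succ m ih =>
    have h := Nat.succ_mul_centralBinom_succ m
    have hsq : ((m+1) * Nat.centralBinom (m+1))^2 = 4*(2*m+1)^2 * Nat.centralBinom m ^2 := by
      rw [h]; ring
    have key : (m+1)^2 * (Nat.centralBinom (m+1) ^ 2 * (2*(m+1)+1)) ≤ (m+1)^2 * 16^(m+1) := by
      have e1 : (m+1)^2 * (Nat.centralBinom (m+1) ^ 2 * (2*(m+1)+1))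
          = 4*(2*m+1)*(2*m+3) * (Nat.centralBinom m ^2 * (2*m+1)) := by nlinarith [hsq]
      rw [e1, pow_succ]
      calc 4*(2*m+1)*(2*m+3) * (Nat.centralBinom m ^2 * (2*m+1))
          ≤ 4*(2*m+1)*(2*m+3) * 16^m := Nat.mul_le_mul_left _ ih
        _ ≤ (m+1)^2*16 * 16^m := Nat.mul_le_mul_right _ (by nlinarith)
        _ = (m+1)^2 * (16^m*16) := by ring
    exact Nat.le_of_mul_le_mul_left key (by positivity)

lemma lemB (n k : ℕ) : n.choose k ^ 2 * (n + 1) ≤ 4 ^ n := by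
  have hmid := Nat.choose_le_middle k n
  rcases Nat.even_or_odd n with ⟨m, hm⟩ | ⟨m, hm⟩
  · subst hm
    have hdiv : (m + m) / 2 = m := by omega
    rw [hdiv] at hmid
    have hcb : (m+m).choose m = Nat.centralBinom m := by rw [Nat.centralBinom, two_mul]
    calc (m+m).choose k ^2 * (m+m+1) ≤ Nat.centralBinom m ^2 * (2*m+1) := by
          rw [← hcb]; exact Nat.mul_le_mul (Nat.pow_le_pow_left hmid 2) (by omega)
      _ ≤ 16 ^ m := lemA m
      _ ≤ 4 ^ (m+m) := by
          rw [show (16:ℕ)=4^2 by norm_num, ← pow_mul]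
          exact Nat.pow_le_pow_right (by norm_num) (by omega)
  · subst hm
    have h2 : (2*m+1) / 2 = m := by omega
    rw [h2] at hmid
    have hcb : Nat.centralBinom (m+1) = 2 * (2*m+1).choose m := by
      rw [Nat.centralBinom, show 2*(m+1) = (2*m+1)+1 by ring, Nat.choose_succ_succ',
        Nat.choose_symm_half]
      ring
    have hA := lemA (m+1)
    rw [hcb] at hA
    -- 4 * choose^2 * (2m+3) ≤ 16^(m+1)  →  choose^2*(2m+2) ≤ 4^(2m+1)
    have : 4 * ((2*m+1).choose m ^2 * (2*(m+1)+1)) ≤ 16 ^ (m+1) := by nlinarith [hA]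
    have h16 : 16 ^ (m+1) = 4 * 4^(2*m+1) := by
      rw [show (16:ℕ)=4^2 by norm_num, ← pow_mul]
      rw [show 2*(m+1) = (2*m+1)+1 by ring, pow_succ]
      ring
    have hfin : (2*m+1).choose m ^2 * (2*(m+1)+1) ≤ 4^(2*m+1) := by omega
    calc (2*m+1).choose k ^2 * (2*m+1+1) ≤ (2*m+1).choose m ^2 * (2*(m+1)+1) := 
          Nat.mul_le_mul (Nat.pow_le_pow_left hmid 2) (by omega)
      _ ≤ 4 ^ (2*m+1) := hfin

def Tf (n k : ℕ) : ℕ := n.choose k * 2^(n-k)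

lemma Tf_rel (n k : ℕ) (h : k < n) : 2 * (k+1) * Tf n (k+1) = (n-k) * Tf n k := by
  unfold Tf
  calc 2*(k+1) * (n.choose (k+1) * 2^(n-(k+1)))
      = (n.choose (k+1) * (k+1)) * (2 * 2^(n-(k+1))) := by ring
    _ = (n.choose k * (n-k)) * 2^(n-k) := by
        rw [Nat.choose_succ_right_eq, ← pow_succ']
        congr 2
        omega
    _ = (n-k) * (n.choose k * 2^(n-k)) := by ring

lemma Tf_mono_up (n k : ℕ) (h : k + 1 ≤ (n+1)/3) : Tf n k ≤ Tf n (k+1) := by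
  have hkn : k < n := by omega
  have hrel := Tf_rel n k hkn
  have h32 : 2*(k+1) ≤ n - k := by omega
  have : 2*(k+1) * Tf n k ≤ 2*(k+1) * Tf n (k+1) := by
    rw [hrel]
    exact Nat.mul_le_mul_right _ h32
  exact Nat.le_of_mul_le_mul_left this (by omega)

lemma Tf_mono_down (n k : ℕ) (h : (n+1)/3 ≤ k) : Tf n (k+1) ≤ Tf n k := by
  rcases lt_or_ge k n with hkn | hkn
  · have hrel := Tf_rel n k hkn
    have h32 : n - k ≤ 2*(k+1) := by omega
    have : 2*(k+1) * Tf n (k+1) ≤ 2*(k+1) * Tf n k := by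
      rw [hrel]
      exact Nat.mul_le_mul_right _ h32
    exact Nat.le_of_mul_le_mul_left this (by omega)
  · have : n.choose (k+1) = 0 := Nat.choose_eq_zero_of_lt (by omega)
    simp [Tf, this]

lemma Tf_le_peak (n k : ℕ) : Tf n k ≤ Tf n ((n+1)/3) := by
  set k0 := (n+1)/3 with hk0
  rcases le_or_gt k k0 with h | h
  · have H : ∀ d j, j + d = k0 → Tf n j ≤ Tf n k0 := by
      intro d
      induction d with
      | zero => intro j hj; simp only [Nat.add_zero] at hj; rw [hj]
      | succ d ih =>
        intro j hj
        exact le_trans (Tf_mono_up n j (by omega)) (ih (j+1) (by omega))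
    exact H (k0 - k) k (by omega)
  · have H : ∀ d j, j = k0 + d → Tf n j ≤ Tf n k0 := by
      intro d
      induction d with
      | zero => intro j hj; simp [hj]
      | succ d ih =>
        intro j hj
        have : Tf n (k0 + d + 1) ≤ Tf n (k0 + d) := Tf_mono_down n (k0+d) (by omega)
        rw [hj, show k0 + (d+1) = k0 + d + 1 from rfl]
        exact le_trans this (ih (k0+d) rfl)
    exact H (k - k0) k (by omega)

lemma Tf_sum (n : ℕ) : ∑ k ∈ range (n+1), Tf n k = 3^n := by
  have h := add_pow 1 2 n (R := ℕ)
  norm_num at h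
  rw [h]
  apply Finset.sum_congr rfl
  intro k hk
  simp [Tf, mul_comm]

-- one step down from m = k0 - i
lemma Tf_step (n i m : ℕ) (hm : 1 ≤ m) (hmn : m ≤ n) (hcon : n ≤ 3*(m+i) + 1) :
    n * Tf n m ≤ n * Tf n (m-1) + (6*i+4) * Tf n m := by
  obtain ⟨d, hd⟩ : ∃ d, n = m + d := ⟨n - m, by omega⟩
  have hrel : 2 * m * Tf n m = (d+1) * Tf n (m-1) := by
    have h1 := Tf_rel n (m-1) (by omega)
    rw [show m - 1 + 1 = m by omega] at h1
    rw [h1]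
    congr 1
    omega
  have hdle : d ≤ 2*m + 3*i + 1 := by omega
  have coef : (d+1)*(m+d) ≤ 2*m*(m+d) + (6*i+4)*(d+1) := by
    rcases le_or_gt (d+1) (2*m) with hc | hc
    · nlinarith
    · nlinarith
  have hmul : (d+1)*(m+d) * Tf n m ≤ (2*m*(m+d) + (6*i+4)*(d+1)) * Tf n m :=
    Nat.mul_le_mul_right _ coef
  have h3 : (m+d) * (2*m*Tf n m) = (m+d) * ((d+1) * Tf n (m-1)) := by rw [hrel]
  refine Nat.le_of_mul_le_mul_left ?_ (show 0 < d+1 by omega)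
  subst hd
  nlinarith [hmul, h3]

lemma Tf_window (n : ℕ) (hn : 4 ≤ n) :
    ∀ i, i ≤ Nat.sqrt n / 3 →
      n * Tf n ((n+1)/3) ≤ n * Tf n ((n+1)/3 - i) + (3*i^2+i) * Tf n ((n+1)/3) := by
  have hjk : Nat.sqrt n / 3 ≤ (n+1)/3 :=
    Nat.div_le_div_right (le_trans (Nat.sqrt_le_self n) (by omega))
  have hk0 : 3 * ((n+1)/3) + 2 ≥ n + 1 := by omega
  intro i
  induction i with
  | zero => simp
  | succ i ih =>
    intro hij
    have hi := ih (by omega)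
    set k0 := (n+1)/3 with hk0def
    have hm1 : 1 ≤ k0 - i := by omega
    have step := Tf_step n i (k0 - i) hm1 (by omega) (by omega)
    have hpeak : Tf n (k0 - i) ≤ Tf n k0 := Tf_le_peak n _
    have e1 : k0 - i - 1 = k0 - (i+1) := by omega
    rw [e1] at step
    calc n * Tf n k0 ≤ n * Tf n (k0 - i) + (3*i^2+i) * Tf n k0 := hi
    _ ≤ (n * Tf n (k0-(i+1)) + (6*i+4) * Tf n (k0-i)) + (3*i^2+i) * Tf n k0 := by omega
    _ ≤ (n * Tf n (k0-(i+1)) + (6*i+4) * Tf n k0) + (3*i^2+i) * Tf n k0 := by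
        have := Nat.mul_le_mul_left (6*i+4) hpeak; omega
    _ = n * Tf n (k0-(i+1)) + (3*(i+1)^2+(i+1)) * Tf n k0 := by ring

lemma Tf_le_pow (n k : ℕ) : Tf n k ≤ 3^n := by
  rcases le_or_gt k n with h | h
  · rw [← Tf_sum n]
    exact Finset.single_le_sum (f := fun k => Tf n k) (fun _ _ => Nat.zero_le _)
      (Finset.mem_range.2 (by omega))
  · simp [Tf, Nat.choose_eq_zero_of_lt h]

lemma lemC (n k : ℕ) : (n.choose k * 2^(n-k))^2 * (n+1) ≤ 36 * 9^n := by
  show Tf n k ^2 * (n+1) ≤ 36 * 9^n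
  rcases lt_or_ge n 4 with hn | hn
  · have h1 : Tf n k ≤ 3^n := Tf_le_pow n k
    have h9 : 3^n * 3^n = 9^n := by
      rw [← Nat.mul_pow]
    calc Tf n k ^2 * (n+1) ≤ (3^n)^2 * (n+1) := Nat.mul_le_mul_right _ (Nat.pow_le_pow_left h1 2)
      _ ≤ 9^n * 4 := by rw [pow_two, h9]; exact Nat.mul_le_mul_left _ (by omega)
      _ ≤ 36 * 9^n := by omega
  · set s := Nat.sqrt n with hs
    set j := s / 3 with hj
    set k0 := (n+1)/3 with hk0
    have hs2 : s * s ≤ n := by have := Nat.sqrt_le' n; nlinarith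
    have hs2' : n < (s+1) * (s+1) := by have := Nat.lt_succ_sqrt' n; nlinarith
    have hsge2 : 2 ≤ s := by
      rw [hs]
      exact (Nat.le_sqrt.2 (by omega))
    have h3j : 3 * j ≤ s := by omega
    have h9j : 9 * (j*j) ≤ n := by nlinarith
    have h2s : 2 * s ≤ n := by nlinarith
    -- For each i ≤ j : Tf n k0 ≤ 2 * Tf n (k0 - i)
    have hhalf : ∀ i, i ≤ j → Tf n k0 ≤ 2 * Tf n (k0 - i) := by
      intro i hi
      have hw := Tf_window n hn i (by omega)
      have hsmall : 2 * (3*i^2+i) ≤ n := by nlinarith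
      have := Nat.mul_le_mul_left (k := 2) hw
      -- 2n Tk0 ≤ 2n T(k0-i) + 2(3i²+i) Tk0 ≤ 2n T(k0-i) + n Tk0
      have h2 : 2*(3*i^2+i) * Tf n k0 ≤ n * Tf n k0 := Nat.mul_le_mul_right _ hsmall
      have h3 : n * (2 * Tf n k0) ≤ n * (2 * (2 * Tf n (k0 - i))) := by nlinarith
      have := Nat.le_of_mul_le_mul_left h3 (by omega)
      omega
    -- sum over window
    have himage : ∑ i ∈ range (j+1), Tf n (k0 - i) ≤ 3^n := by
      have hinj : Set.InjOn (fun i => k0 - i) (range (j+1)) := by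
        intro a ha b hb hab
        simp only [Finset.coe_range, Set.mem_Iio] at ha hb
        have hjk : j ≤ k0 := by
          rw [hj, hk0]
          exact Nat.div_le_div_right (le_trans (Nat.sqrt_le_self n) (by omega))
        simp only at hab
        omega
      rw [← Finset.sum_image hinj]
      rw [← Tf_sum n]
      apply Finset.sum_le_sum_of_subset
      intro x hx
      simp only [Finset.mem_image, Finset.mem_range] at hx ⊢
      obtain ⟨i, hi, rfl⟩ := hx
      omega
    have hsum : (j+1) * Tf n k0 ≤ 2 * 3^n := by
      calc (j+1) * Tf n k0 = ∑ _i ∈ range (j+1), Tf n k0 := by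
            rw [Finset.sum_const, Finset.card_range, smul_eq_mul]
        _ ≤ ∑ i ∈ range (j+1), 2 * Tf n (k0 - i) := Finset.sum_le_sum (fun i hi =>
            hhalf i (by simpa using Nat.lt_succ_iff.mp (Finset.mem_range.1 hi)))
        _ = 2 * ∑ i ∈ range (j+1), Tf n (k0 - i) := by rw [Finset.mul_sum]
        _ ≤ 2 * 3^n := Nat.mul_le_mul_left _ himage
    -- 9 (j+1)^2 ≥ n+1
    have h3j1 : s + 1 ≤ 3 * (j + 1) := by omega
    have hjs : 9 * ((j+1)*(j+1)) ≥ n+1 := by nlinarith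
    have hpk : Tf n k ≤ Tf n k0 := Tf_le_peak n k
    calc Tf n k ^2 * (n+1) ≤ Tf n k0 ^2 * (9 * ((j+1)*(j+1))) := by
          have := Nat.pow_le_pow_left hpk 2
          exact Nat.mul_le_mul this hjs
      _ = 9 * (((j+1) * Tf n k0) * ((j+1) * Tf n k0)) := by ring
      _ ≤ 9 * ((2*3^n) * (2*3^n)) := by
          have := Nat.mul_le_mul hsum hsum
          omega
      _ = 36 * 9^n := by rw [show (9:ℕ) = 3*3 by norm_num, Nat.mul_pow]; ring

lemma lemD (l : ℕ) : (l+1)^3 * 16^l ≤ 27 * 27^l := by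
  induction l with
  | zero => norm_num
  | succ l ih =>
    rcases lt_or_ge l 5 with h | h
    · interval_cases l <;> norm_num
    · have h5a : 5*l^2 ≤ l^3 := by nlinarith
      have h5b : 5*l ≤ l^2 := by nlinarith
      have h1 : 16*(l+2)^3 ≤ 27*(l+1)^3 := by nlinarith
      calc (l+2)^3 * 16^(l+1) = 16*(l+2)^3 * 16^l := by ring
        _ ≤ 27*(l+1)^3 * 16^l := Nat.mul_le_mul_right _ h1
        _ = 27 * ((l+1)^3 * 16^l) := by ring
        _ ≤ 27 * (27 * 27^l) := Nat.mul_le_mul_left _ ih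
        _ = 27 * 27^(l+1) := by ring

lemma choose_le_two_pow (n k : ℕ) : n.choose k ≤ 2^n := by
  rcases le_or_gt k n with h | h
  · rw [← Nat.sum_range_choose n]
    exact Finset.single_le_sum (f := fun i => n.choose i) (fun _ _ => Nat.zero_le _)
      (Finset.mem_range.2 (by omega))
  · simp [Nat.choose_eq_zero_of_lt h]

lemma pow_base_pow (c m e : ℕ) : (c^m)^e = (c^e)^m := by
  rw [← pow_mul, mul_comm, pow_mul]

lemma perWord (l a b : ℕ) (hab : a + b ≤ l) :
    l.choose a * ((l-a).choose b) * (l+1) ≤ 11 * 3^l := by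
  rcases le_or_gt (3*a) (2*l) with hc | hc
  · have h1 := lemC l a
    have h2 := lemB (l-a) b
    have hcomb : (l.choose a * (l-a).choose b)^2 * ((l+1) * (l-a+1)) ≤ 36 * 9^l := by
      have h4 : ((2:ℕ)^(l-a))^2 = 4^(l-a) := by rw [pow_base_pow]; norm_num
      have e : (l.choose a * (l-a).choose b)^2 * ((l+1) * (l-a+1)) * 4^(l-a)
          = ((l.choose a * 2^(l-a))^2 * (l+1)) * ((l-a).choose b ^2 * (l-a+1)) := by
        rw [mul_pow (l.choose a) (2^(l-a)) 2, h4]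
        ring
      have h12 := Nat.mul_le_mul h1 h2
      rw [← e] at h12
      exact Nat.le_of_mul_le_mul_right h12 (by positivity)
    have h3 : 3 * (l - a + 1) ≥ l + 1 := by omega
    have hsq : ((l.choose a * (l-a).choose b) * (l+1))^2 ≤ (11 * 3^l)^2 := by
      calc ((l.choose a * (l-a).choose b) * (l+1))^2
          = (l.choose a * (l-a).choose b)^2 * ((l+1) * (l+1)) := by ring
        _ ≤ (l.choose a * (l-a).choose b)^2 * ((l+1) * (3*(l-a+1))) :=
            Nat.mul_le_mul_left _ (Nat.mul_le_mul_left _ h3)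
        _ = 3 * ((l.choose a * (l-a).choose b)^2 * ((l+1) * (l-a+1))) := by ring
        _ ≤ 3 * (36 * 9^l) := Nat.mul_le_mul_left _ hcomb
        _ ≤ 121 * 9^l := by omega
        _ = (11*3^l)^2 := by
            have h9 : ((3:ℕ)^l)^2 = 9^l := by rw [pow_base_pow]; norm_num
            rw [mul_pow, h9]; norm_num
    have := (Nat.pow_le_pow_iff_left (two_ne_zero)).mp hsq
    calc l.choose a * ((l-a).choose b) * (l+1)
        = (l.choose a * (l-a).choose b) * (l+1) := by ring
      _ ≤ 11 * 3^l := this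
  · have hB1 : l.choose a ≤ 2^l := choose_le_two_pow l a
    have hB2 : (l-a).choose b ≤ 2^(l-a) := choose_le_two_pow (l-a) b
    have hcube : ((l.choose a * (l-a).choose b) * (l+1))^3 ≤ (11*3^l)^3 := by
      have hP : l.choose a * (l-a).choose b ≤ 2^l * 2^(l-a) := Nat.mul_le_mul hB1 hB2
      have h8 : (2:ℕ)^(3*(l-a)) ≤ 2^l := Nat.pow_le_pow_right (by norm_num) (by omega)
      calc ((l.choose a * (l-a).choose b) * (l+1))^3
          ≤ ((2^l * 2^(l-a)) * (l+1))^3 := Nat.pow_le_pow_left (Nat.mul_le_mul_right _ hP) 3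
        _ = (l+1)^3 * 8^l * 2^(3*(l-a)) := by
            have h8 : ((2:ℕ)^l)^3 = 8^l := by rw [pow_base_pow]; norm_num
            have h2e : ((2:ℕ)^(l-a))^3 = 2^(3*(l-a)) := by rw [← pow_mul, mul_comm]
            rw [mul_pow, mul_pow, h8, h2e]
            ring
        _ ≤ (l+1)^3 * 8^l * 2^l := Nat.mul_le_mul_left _ h8
        _ = (l+1)^3 * 16^l := by
            rw [mul_assoc, ← Nat.mul_pow]
        _ ≤ 27 * 27^l := lemD l
        _ = (3*3^l)^3 := by
            have h27 : ((3:ℕ)^l)^3 = 27^l := by rw [pow_base_pow]; norm_num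
            rw [mul_pow, h27]; norm_num
        _ ≤ (11*3^l)^3 := Nat.pow_le_pow_left (Nat.mul_le_mul_right _ (by norm_num)) 3
    have := (Nat.pow_le_pow_iff_left (three_ne_zero)).mp hcube
    calc l.choose a * ((l-a).choose b) * (l+1)
        = (l.choose a * (l-a).choose b) * (l+1) := by ring
      _ ≤ 11 * 3^l := this

abbrev cnt (ℓ : ℕ) (f : Fin ℓ → Fin 3) (c : Fin 3) : ℕ := (univ.filter fun i => f i = c).card

lemma cnt_add_le (ℓ : ℕ) (f : Fin ℓ → Fin 3) : cnt ℓ f 0 + cnt ℓ f 1 ≤ ℓ := by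
  classical
  have hd : Disjoint (univ.filter fun i => f i = 0) (univ.filter fun i => f i = 1) := by
    simp only [Finset.disjoint_filter]
    intro i _ h0 h1
    rw [h0] at h1
    exact absurd h1 (by decide)
  calc cnt ℓ f 0 + cnt ℓ f 1
      = ((univ.filter fun i => f i = 0) ∪ (univ.filter fun i => f i = 1)).card :=
        (Finset.card_union_of_disjoint hd).symm
    _ ≤ (univ : Finset (Fin ℓ)).card := Finset.card_le_card (Finset.subset_univ _)
    _ = ℓ := by simp

noncomputable def Dset (ℓ : ℕ) : Finset (Σ _f : Fin ℓ → Fin 3, Σ _s : Finset (Fin ℓ), Finset (Fin ℓ)) :=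
  univ.sigma (fun f => (Finset.univ.powersetCard (cnt ℓ f 0)).sigma
    (fun s => sᶜ.powersetCard (cnt ℓ f 1)))

lemma Dset_card (ℓ : ℕ) : (Dset ℓ).card * (ℓ+1) ≤ 11 * 9^ℓ := by
  classical
  have hcard : (Dset ℓ).card = ∑ f : Fin ℓ → Fin 3, ℓ.choose (cnt ℓ f 0) * (ℓ - cnt ℓ f 0).choose (cnt ℓ f 1) := by
    rw [Dset, Finset.card_sigma]
    apply Finset.sum_congr rfl
    intro f _
    rw [Finset.card_sigma]
    have : ∀ s : Finset (Fin ℓ), s ∈ Finset.univ.powersetCard (cnt ℓ f 0) →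
        (sᶜ.powersetCard (cnt ℓ f 1)).card = (ℓ - cnt ℓ f 0).choose (cnt ℓ f 1) := by
      intro s hs
      rw [Finset.mem_powersetCard] at hs
      rw [Finset.card_powersetCard, Finset.card_compl, hs.2, Fintype.card_fin]
    rw [Finset.sum_congr rfl this, Finset.sum_const, Finset.card_powersetCard,
      Finset.card_univ, Fintype.card_fin, smul_eq_mul]
  rw [hcard, Finset.sum_mul]
  have hle : ∀ f : Fin ℓ → Fin 3,
      ℓ.choose (cnt ℓ f 0) * (ℓ - cnt ℓ f 0).choose (cnt ℓ f 1) * (ℓ+1) ≤ 11 * 3^ℓ :=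
    fun f => perWord ℓ _ _ (cnt_add_le ℓ f)
  calc ∑ f : Fin ℓ → Fin 3, ℓ.choose (cnt ℓ f 0) * (ℓ - cnt ℓ f 0).choose (cnt ℓ f 1) * (ℓ+1)
      ≤ ∑ _f : Fin ℓ → Fin 3, 11 * 3^ℓ := Finset.sum_le_sum (fun f _ => hle f)
    _ = 3^ℓ * (11 * 3^ℓ) := by
        rw [Finset.sum_const, Finset.card_univ, Fintype.card_fun, Fintype.card_fin,
          Fintype.card_fin, smul_eq_mul]
    _ = 11 * 9^ℓ := by
        rw [show (9:ℕ) = 3*3 by norm_num, Nat.mul_pow]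
        ring

lemma main_count (ℓ : ℕ) :
    Nat.card {p : List (Fin 3) × List (Fin 3) //
      p.1.length = ℓ ∧ p.2.length = ℓ ∧ p.1.Perm p.2} * (ℓ+1) ≤ 11 * 9^ℓ := by
  classical
  set S := {p : List (Fin 3) × List (Fin 3) //
      p.1.length = ℓ ∧ p.2.length = ℓ ∧ p.1.Perm p.2} with hS
  have hmem : ∀ p : S,
      (⟨fun i => p.1.1.get (Fin.cast p.2.1.symm i),
        ⟨univ.filter (fun i => p.1.2.get (Fin.cast p.2.2.1.symm i) = 0),
         univ.filter (fun i => p.1.2.get (Fin.cast p.2.2.1.symm i) = 1)⟩⟩ :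
        Σ _f : Fin ℓ → Fin 3, Σ _s : Finset (Fin ℓ), Finset (Fin ℓ)) ∈ Dset ℓ := by
    rintro ⟨⟨u, v⟩, hu, hv, hp⟩
    simp only [Dset, Finset.mem_sigma, Finset.mem_univ, true_and, Finset.mem_powersetCard]
    refine ⟨⟨Finset.subset_univ _, ?_⟩, ?_, ?_⟩
    · rw [count_filter_card' v hv 0, hp.symm.count_eq, ← count_filter_card' u hu 0]
    · intro i hi
      simp only [Finset.mem_filter, Finset.mem_univ, true_and] at hi
      simp only [Finset.mem_compl, Finset.mem_filter, Finset.mem_univ, true_and, hi]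
      decide
    · rw [count_filter_card' v hv 1, hp.symm.count_eq, ← count_filter_card' u hu 1]
  set F : S → {x // x ∈ Dset ℓ} := fun p =>
    ⟨⟨fun i => p.1.1.get (Fin.cast p.2.1.symm i),
      ⟨univ.filter (fun i => p.1.2.get (Fin.cast p.2.2.1.symm i) = 0),
       univ.filter (fun i => p.1.2.get (Fin.cast p.2.2.1.symm i) = 1)⟩⟩, hmem p⟩ with hF
  have hinj : Function.Injective F := by
    intro p q h
    have h' := congrArg Subtype.val h
    have hf := congrArg (fun x : (Σ _f : Fin ℓ → Fin 3, Σ _s : Finset (Fin ℓ), Finset (Fin ℓ)) => x.1) h'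
    have hrest := congrArg (fun x : (Σ _f : Fin ℓ → Fin 3, Σ _s : Finset (Fin ℓ), Finset (Fin ℓ)) => x.2) h'
    have hs0 := congrArg (fun y : (Σ _s : Finset (Fin ℓ), Finset (Fin ℓ)) => y.1) hrest
    have hs1 := congrArg (fun y : (Σ _s : Finset (Fin ℓ), Finset (Fin ℓ)) => y.2) hrest
    simp only [hF] at hf hs0 hs1
    have hueq : p.1.1 = q.1.1 := by
      have hlu : p.1.1.length = ℓ := p.2.1
      have hlu' : q.1.1.length = ℓ := q.2.1
      apply List.ext_getElem (by omega)
      intro n h1 h2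
      have := congrFun hf ⟨n, by omega⟩
      simpa using this
    have hveq : p.1.2 = q.1.2 := by
      have hlv : p.1.2.length = ℓ := p.2.2.1
      have hlv' : q.1.2.length = ℓ := q.2.2.1
      apply List.ext_getElem (by omega)
      intro n h1 h2
      have h0 := Finset.ext_iff.mp hs0 (⟨n, by omega⟩ : Fin ℓ)
      have h1' := Finset.ext_iff.mp hs1 (⟨n, by omega⟩ : Fin ℓ)
      simp only [Finset.mem_filter, Finset.mem_univ, true_and] at h0 h1'
      have key : ∀ x y : Fin 3, (x = 0 ↔ y = 0) → (x = 1 ↔ y = 1) → x = y := by decide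
      simpa using key _ _ h0 h1'
    exact Subtype.ext (Prod.ext hueq hveq)
  have hcard : Nat.card S ≤ (Dset ℓ).card := by
    have := Nat.card_le_card_of_injective F hinj
    rwa [Nat.card_eq_finsetCard] at this
  calc Nat.card S * (ℓ+1) ≤ (Dset ℓ).card * (ℓ+1) := Nat.mul_le_mul_right _ hcard
    _ ≤ 11 * 9^ℓ := Dset_card ℓ

theorem statement_12 : ∃ C : ℝ, 0 < C ∧
    ∀ ℓ : ℕ, 1 ≤ ℓ →
      ((Nat.card {p : List (Fin 3) × List (Fin 3) //
          p.1.length = ℓ ∧ p.2.length = ℓ ∧ p.1.Perm p.2}) : ℝ) ≤ C * 9 ^ ℓ / ℓ := by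
  refine ⟨11, by norm_num, ?_⟩
  intro ℓ hℓ
  have h := main_count ℓ
  have h2 : Nat.card {p : List (Fin 3) × List (Fin 3) //
      p.1.length = ℓ ∧ p.2.length = ℓ ∧ p.1.Perm p.2} * ℓ ≤ 11 * 9^ℓ := by
    calc Nat.card _ * ℓ ≤ Nat.card _ * (ℓ+1) := Nat.mul_le_mul_left _ (by omega)
      _ ≤ 11 * 9^ℓ := h
  have hpos : (0:ℝ) < (ℓ:ℝ) := by exact_mod_cast hℓ
  rw [le_div_iff₀ hpos]
  exact_mod_cast h2
end

section
/- Let β be a rational number with 1 < β ≤ 2. If a word w is a strong Abelian β-power, then its reversal w^R is also a strong Abelian β-power. -/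
theorem statement_13 {A : Type*} (β : ℚ) (hβ₁ : 1 < β) (hβ₂ : β ≤ 2)
    (w : List A) (hw : IsStrongAPower β w) :
    IsStrongAPower β w.reverse := by
  obtain ⟨u₁, us, u', h1, h2, h3, h4, h5, h6, h7⟩ := hw
  have hu₁pos : 0 < u₁.length := List.length_pos_iff.2 h1
  match us with
  | [] =>
    -- β < 2 case : w = u₁ ++ u'
    simp only [List.flatten, List.append_nil, List.flatten_nil] at h6
    have hlen : w.length = u₁.length + u'.length := by
      subst h6; simp
    have hu'le : u'.length ≤ u₁.length := h4.le
    refine ⟨u'.reverse ++ u₁.reverse.take (u₁.length - u'.length), [],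
      u₁.reverse.drop (u₁.length - u'.length), ?_, by simpa using h2, by simp, ?_, ?_, ?_, ?_⟩
    · intro hcon
      have := congrArg List.length hcon
      simp [Nat.min_eq_left (Nat.sub_le _ _)] at this
      omega
    · simp [Nat.min_eq_left (Nat.sub_le _ _)]
      omega
    · have hdrop : u₁.reverse.drop (u₁.length - u'.length) = (u₁.take u'.length).reverse := by
        rw [List.reverse_take]
      have htake : (u'.reverse ++ u₁.reverse.take (u₁.length - u'.length)).take
          (u₁.reverse.drop (u₁.length - u'.length)).length = u'.reverse := by
        apply List.take_left'
        simp; omega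
      rw [htake, hdrop]
      exact (List.reverse_perm _).trans (h5.symm.trans (List.reverse_perm u').symm)
    · subst h6
      simp [List.reverse_append, List.take_append_drop]
    · have hL : (u'.reverse ++ u₁.reverse.take (u₁.length - u'.length)).length = u₁.length := by
        simp [Nat.min_eq_left (Nat.sub_le _ _)]
        omega
      rw [List.length_reverse, hL]
      exact h7
  | [u₂] =>
    -- β = 2 case
    have hβ2 : β = 2 := by
      have hfl2 : (2 : ℤ) = ⌊β⌋ := by simpa using h2
      have h2le : (2 : ℚ) ≤ β := by
        have := Int.floor_le β
        rw [← hfl2] at this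
        exact_mod_cast this
      linarith
    have hperm : u₂.Perm u₁ := h3 u₂ (by simp)
    have hl2 : u₂.length = u₁.length := hperm.length_eq
    have hwlen : w.length = u₁.length + u₂.length + u'.length := by
      subst h6; simp [List.flatten]; ring
    have hu'0 : u' = [] := by
      have : (w.length : ℚ) = 2 * u₁.length := by rw [h7, hβ2]
      have : w.length = 2 * u₁.length := by exact_mod_cast this
      have : u'.length = 0 := by omega
      exact List.length_eq_zero_iff.1 this
    subst hu'0
    refine ⟨u₂.reverse, [u₁.reverse], [], ?_, by simpa using h2, ?_, ?_, by simp, ?_, ?_⟩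
    · simp [← List.length_pos_iff, hl2, hu₁pos]
    · intro u hu
      simp at hu
      subst hu
      exact (List.reverse_perm u₁).trans (hperm.symm.trans (List.reverse_perm u₂).symm)
    · simp [hl2]; omega
    · subst h6
      simp [List.flatten, List.reverse_append]
    · rw [List.length_reverse, List.length_reverse, hl2]
      exact h7
  | u₂ :: u₃ :: rest =>
    exfalso
    have hle : ⌊β⌋ ≤ 2 := by
      calc ⌊β⌋ ≤ ⌊(2 : ℚ)⌋ := Int.floor_le_floor hβ₂
        _ = 2 := by norm_num
    simp at h2
    omega
end
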